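/- arXiv:2002.01163 — 5 statements merged into one kernel-verified Lean document; each statement's English description precedes it below -/
import Mathlib

section
/- If K is a relatively compact subset of the space of Dunford-Pettis p-convergent operators from X to Y (with the operator norm), then K is a p-(DPL) set in L(X,Y). -/
open Filter Topology Metric Set

section Defs
variable (p : ENNReal) {X Y : Type*} [NormedAddCommGroup X] [NormedSpace ℝ X]
  [NormedAddCommGroup Y] [NormedSpace ℝ Y]

/-- A sequence is weakly `p`-summable: for `p = ∞` this means weakly null. -/
def WeaklyPSummable (x : ℕ → X) : Prop :=
  if p = ⊤ then ∀ f : X →L[ℝ] ℝ, Tendsto (fun n => f (x n)) atTop (nhds 0)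
  else ∀ f : X →L[ℝ] ℝ, Memℓp (fun n => f (x n)) p

/-- A bounded set on which every weakly null sequence of functionals converges uniformly to 0. -/
def DunfordPettisSet (A : Set X) : Prop :=
  Bornology.IsBounded A ∧
  ∀ f : ℕ → X →L[ℝ] ℝ,
    (∀ F : (X →L[ℝ] ℝ) →L[ℝ] ℝ, Tendsto (fun n => F (f n)) atTop (nhds 0)) →
    ∀ ε > 0, ∃ N, ∀ n ≥ N, ∀ x ∈ A, |f n x| < ε

def PRightNull (x : ℕ → X) : Prop :=
  WeaklyPSummable p x ∧ DunfordPettisSet (Set.range x)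

def IsPDPLSet (K : Set (X →L[ℝ] Y)) : Prop :=
  ∀ x : ℕ → X, PRightNull p x → ∀ ε > 0, ∃ N, ∀ n ≥ N, ∀ T ∈ K, ‖T (x n)‖ < ε

def DPpConvergent (T : X →L[ℝ] Y) : Prop :=
  ∀ x : ℕ → X, PRightNull p x → Tendsto (fun n => ‖T (x n)‖) atTop (nhds 0)

def PConvergent (T : X →L[ℝ] Y) : Prop :=
  ∀ x : ℕ → X, WeaklyPSummable p x → Tendsto (fun n => ‖T (x n)‖) atTop (nhds 0)

def UBounded (U B : Set X) : Prop :=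
  B ⊆ U ∧ Bornology.IsBounded B ∧ ∃ ε > 0, ∀ x ∈ B, ∀ y ∉ U, ε ≤ dist x y

def PRightCauchy (x : ℕ → X) : Prop :=
  (∀ a b : ℕ → ℕ, StrictMono a → StrictMono b →
    WeaklyPSummable p (fun k => x (a k) - x (b k))) ∧
  DunfordPettisSet (Set.range x)

def PRightSeqContinuous (U : Set X) (f : X → Y) : Prop :=
  ∀ x : ℕ → X, (∀ n, x n ∈ U) → UBounded U (Set.range x) → PRightCauchy p x →
    ∃ y : Y, Tendsto (fun n => f (x n)) atTop (nhds y)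

def RelWeaklyCompact (A : Set X) : Prop :=
  IsCompact (closure ((toWeakSpace ℝ X) '' A))

end Defs

theorem stmt0 {X Y : Type*} [NormedAddCommGroup X] [NormedSpace ℝ X] [CompleteSpace X]
    [NormedAddCommGroup Y] [NormedSpace ℝ Y] [CompleteSpace Y]
    (p : ENNReal) (hp : 1 ≤ p) (hp' : p ≠ ⊤)
    (K : Set (X →L[ℝ] Y))
    (hKsub : ∀ T ∈ K, DPpConvergent p T)
    (hKcomp : IsCompact (closure K)) :
    IsPDPLSet p K := by
  intro x hx ε hε
  -- bound on the sequence
  obtain ⟨M, hM⟩ := (isBounded_iff_forall_norm_le.mp hx.2.1)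
  have hMx : ∀ n, ‖x n‖ ≤ M := fun n => hM _ (Set.mem_range_self n)
  have hM0 : 0 ≤ M := le_trans (norm_nonneg _) (hMx 0)
  -- finite net inside K
  have hTB : TotallyBounded K := (hKcomp.totallyBounded).subset subset_closure
  set δ := ε / (2 * (M + 1)) with hδ
  have hδpos : 0 < δ := by positivity
  obtain ⟨t, htK, htfin, htcov⟩ := finite_approx_of_totallyBounded hTB δ hδpos
  -- each center converges
  have hconv : ∀ T ∈ t, Tendsto (fun n => ‖T (x n)‖) atTop (nhds 0) :=
    fun T hT => hKsub T (htK hT) x hx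
  have key : ∀ᶠ n in atTop, ∀ T ∈ t, ‖T (x n)‖ < ε / 2 := by
    rw [eventually_all_finite htfin]
    intro T hT
    exact (hconv T hT).eventually (eventually_lt_nhds (by positivity : (0:ℝ) < ε / 2)) |>.mono
      (fun n hn => lt_of_abs_lt (by simpa [abs_of_nonneg (norm_nonneg _)] using hn))
  obtain ⟨N, hN⟩ := eventually_atTop.mp key
  refine ⟨N, fun n hn T hTK => ?_⟩
  obtain ⟨S, hSt, hTS⟩ : ∃ S ∈ t, T ∈ Metric.ball S δ := by
    simpa using htcov hTK
  have hdist : ‖T - S‖ < δ := by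
    rw [Metric.mem_ball, dist_eq_norm] at hTS
    exact hTS
  calc ‖T (x n)‖ ≤ ‖S (x n)‖ + ‖(T - S) (x n)‖ := by
        have : T (x n) = S (x n) + (T - S) (x n) := by simp
        rw [this]; exact norm_add_le _ _
    _ ≤ ‖S (x n)‖ + ‖T - S‖ * ‖x n‖ := by
        gcongr; exact (T - S).le_opNorm _
    _ < ε / 2 + δ * (M + 1) := by
        have h1 := hN n hn S hSt
        have h2 : ‖T - S‖ * ‖x n‖ < δ * (M + 1) := by
          calc ‖T - S‖ * ‖x n‖ ≤ ‖T - S‖ * (M + 1) := by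
                gcongr; linarith [hMx n]
            _ < δ * (M + 1) := mul_lt_mul_of_pos_right hdist (by linarith)
        linarith
    _ = ε / 2 + ε / 2 := by
        rw [hδ]; field_simp
    _ = ε := by ring
end

section
/- The closed absolutely convex hull of a p-(DPL) set in L(X,Y) is again a p-(DPL) set. -/
open Filter Topology Metric Set

theorem stmt1 {X Y : Type*} [NormedAddCommGroup X] [NormedSpace ℝ X] [CompleteSpace X]
    [NormedAddCommGroup Y] [NormedSpace ℝ Y] [CompleteSpace Y]
    (p : ENNReal) (hp : 1 ≤ p) (hp' : p ≠ ⊤)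
    (K : Set (X →L[ℝ] Y)) (hK : IsPDPLSet p K) :
    IsPDPLSet p (closure
      {S | ∃ (n : ℕ) (c : Fin n → ℝ) (T : Fin n → X →L[ℝ] Y),
        (∀ i, T i ∈ K) ∧ (∑ i, |c i|) ≤ 1 ∧ S = ∑ i, c i • T i}) := by
  intro x hx ε hε
  obtain ⟨C, hC⟩ := isBounded_iff_forall_norm_le.mp hx.2.1
  set M : ℝ := max C 0 with hMdef
  have hM0 : 0 ≤ M := le_max_right _ _
  have hxM : ∀ n, ‖x n‖ ≤ M := fun n =>
    le_trans (hC _ (Set.mem_range_self n)) (le_max_left _ _)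
  obtain ⟨N, hN⟩ := hK x hx (ε / 2) (by positivity)
  refine ⟨N, fun n hn S hS => ?_⟩
  have hδ : (0:ℝ) < ε / (2 * (M + 1)) := by positivity
  obtain ⟨S', hS'mem, hdist⟩ := Metric.mem_closure_iff.mp hS _ hδ
  obtain ⟨m, c, T, hT, hc, rfl⟩ := hS'mem
  have h1 : ‖(∑ i, c i • T i) (x n)‖ ≤ ε / 2 := by
    rw [ContinuousLinearMap.sum_apply]
    calc ‖∑ i, (c i • T i) (x n)‖ ≤ ∑ i, ‖(c i • T i) (x n)‖ := norm_sum_le _ _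
    _ = ∑ i, |c i| * ‖T i (x n)‖ := by
        simp [ContinuousLinearMap.smul_apply, norm_smul, Real.norm_eq_abs]
    _ ≤ ∑ i, |c i| * (ε / 2) := by
        refine Finset.sum_le_sum fun i _ => ?_
        exact mul_le_mul_of_nonneg_left (le_of_lt (hN n hn (T i) (hT i))) (abs_nonneg _)
    _ = (∑ i, |c i|) * (ε / 2) := by rw [← Finset.sum_mul]
    _ ≤ 1 * (ε / 2) := by
        exact mul_le_mul_of_nonneg_right hc (by positivity)
    _ = ε / 2 := one_mul _
  have h2 : ‖S (x n) - (∑ i, c i • T i) (x n)‖ < ε / 2 := by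
    have := (S - ∑ i, c i • T i).le_opNorm (x n)
    rw [ContinuousLinearMap.sub_apply] at this
    calc ‖S (x n) - (∑ i, c i • T i) (x n)‖ ≤ ‖S - ∑ i, c i • T i‖ * ‖x n‖ := this
    _ ≤ ‖S - ∑ i, c i • T i‖ * M := by
        exact mul_le_mul_of_nonneg_left (hxM n) (norm_nonneg _)
    _ ≤ ‖S - ∑ i, c i • T i‖ * (M + 1) := by
        exact mul_le_mul_of_nonneg_left (by linarith) (norm_nonneg _)
    _ < (ε / (2 * (M + 1))) * (M + 1) := by
        have : ‖S - ∑ i, c i • T i‖ < ε / (2 * (M + 1)) := by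
          rw [← dist_eq_norm]; exact hdist
        exact mul_lt_mul_of_pos_right this (by positivity)
    _ = ε / 2 := by field_simp
  calc ‖S (x n)‖ ≤ ‖S (x n) - (∑ i, c i • T i) (x n)‖ + ‖(∑ i, c i • T i) (x n)‖ :=
        by
        have := norm_add_le (S (x n) - (∑ i, c i • T i) (x n)) ((∑ i, c i • T i) (x n))
        simpa using this
  _ < ε / 2 + ε / 2 := by linarith
  _ = ε := by ring
end

section
/- Let U ⊆ X be open and convex, and let f : U → Y be differentiable such that for every U-bounded Dunford–Pettis set K ⊆ U, the image f′(K) is a p-(DPL) set in L(X,Y). Then f is p-Right sequentially continuous: f maps U-bounded p-Right Cauchy sequences to norm convergent sequences. -/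
open Filter Topology Metric Set

section Aux
open scoped Pointwise
variable {X : Type*} [NormedAddCommGroup X] [NormedSpace ℝ X]

lemma DP_mono {A B : Set X} (hA : DunfordPettisSet A) (hBA : B ⊆ A) :
    DunfordPettisSet B := by
  refine ⟨hA.1.subset hBA, fun g hg ε hε => ?_⟩
  obtain ⟨N, hN⟩ := hA.2 g hg ε hε
  exact ⟨N, fun n hn x hx => hN n hn x (hBA hx)⟩

lemma DP_sub {A B : Set X} (hA : DunfordPettisSet A) (hB : DunfordPettisSet B) :
    DunfordPettisSet (A - B) := by
  refine ⟨hA.1.sub hB.1, fun g hg ε hε => ?_⟩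
  obtain ⟨N₁, hN₁⟩ := hA.2 g hg (ε / 2) (by linarith)
  obtain ⟨N₂, hN₂⟩ := hB.2 g hg (ε / 2) (by linarith)
  refine ⟨max N₁ N₂, fun n hn z hz => ?_⟩
  obtain ⟨u, hu, v, hv, rfl⟩ := hz
  have h1 := hN₁ n (le_trans (le_max_left _ _) hn) u hu
  have h2 := hN₂ n (le_trans (le_max_right _ _) hn) v hv
  calc |g n (u - v)| = |g n u - g n v| := by rw [map_sub]
    _ ≤ |g n u| + |g n v| := abs_sub _ _
    _ < ε / 2 + ε / 2 := by linarith
    _ = ε := by ring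

lemma DP_convexHull {A : Set X} (hA : DunfordPettisSet A) :
    DunfordPettisSet (convexHull ℝ A) := by
  refine ⟨?_, fun g hg ε hε => ?_⟩
  · exact (isBounded_convexHull.mpr hA.1)
  · obtain ⟨N, hN⟩ := hA.2 g hg (ε / 2) (by linarith)
    refine ⟨N, fun n hn z hz => ?_⟩
    have hconv : Convex ℝ {w : X | |g n w| ≤ ε / 2} := by
      intro u hu v hv a b ha hb hab
      simp only [Set.mem_setOf_eq, map_add, map_smul, smul_eq_mul] at *
      calc |a * g n u + b * g n v| ≤ |a * g n u| + |b * g n v| := abs_add_le _ _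
        _ = a * |g n u| + b * |g n v| := by
            rw [abs_mul, abs_mul, abs_of_nonneg ha, abs_of_nonneg hb]
        _ ≤ a * (ε / 2) + b * (ε / 2) := by gcongr
        _ = ε / 2 := by rw [← add_mul, hab, one_mul]
    have hsub : convexHull ℝ A ⊆ {w : X | |g n w| ≤ ε / 2} :=
      convexHull_min (fun w hw => (hN n hn w hw).le) hconv
    exact lt_of_le_of_lt (hsub hz) (by linarith)

end Aux

theorem stmt7 {X Y : Type*} [NormedAddCommGroup X] [NormedSpace ℝ X] [CompleteSpace X]
    [NormedAddCommGroup Y] [NormedSpace ℝ Y] [CompleteSpace Y]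
    (p : ENNReal) (hp : 1 ≤ p) (hp' : p ≠ ⊤)
    (U : Set X) (hU : IsOpen U) (hUconv : Convex ℝ U)
    (f : X → Y) (f' : X → X →L[ℝ] Y)
    (hdiff : ∀ x ∈ U, HasFDerivAt f (f' x) x)
    (hDPL : ∀ K : Set X, UBounded U K → DunfordPettisSet K → IsPDPLSet p (f' '' K)) :
    PRightSeqContinuous p U f := by
  intro x hxU hxB hxC
  -- The convex hull of the range of x
  set K := convexHull ℝ (Set.range x) with hKdef
  have hrU : Set.range x ⊆ U := hxB.1
  have hKU : K ⊆ U := convexHull_min hrU hUconv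
  have hKbdd : Bornology.IsBounded K := isBounded_convexHull.mpr hxB.2.1
  obtain ⟨δ, hδ, hdist⟩ := hxB.2.2
  -- K is U-bounded
  have hKdist : ∀ z ∈ K, ∀ y ∉ U, δ ≤ dist z y := by
    have hSconv : Convex ℝ {z : X | ∀ y ∉ U, δ ≤ dist z y} := by
      intro u hu v hv a b ha hb hab y hy
      by_contra hlt
      push_neg at hlt
      set w := y - (a • u + b • v) with hw
      have hwn : ‖w‖ < δ := by
        rw [hw, ← dist_eq_norm']
        exact hlt
      have hu' : u + w ∈ U := by
        by_contra h
        have := hu _ h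
        rw [dist_eq_norm] at this
        simp only [sub_add_cancel_left, norm_neg] at this
        linarith
      have hv' : v + w ∈ U := by
        by_contra h
        have := hv _ h
        rw [dist_eq_norm] at this
        simp only [sub_add_cancel_left, norm_neg] at this
        linarith
      have hy' : y = a • (u + w) + b • (v + w) := by
        rw [smul_add, smul_add]
        have : a • w + b • w = w := by rw [← add_smul, hab, one_smul]
        rw [hw]
        abel_nf
        rw [← add_smul, hab, one_smul]
        abel
      rw [hy'] at hy
      exact hy (hUconv hu' hv' ha hb hab)
    exact fun z hz => convexHull_min (fun u hu => hdist u hu) hSconv hz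
  have hKUB : UBounded U K := ⟨hKU, hKbdd, δ, hδ, hKdist⟩
  have hKDP : DunfordPettisSet K := DP_convexHull hxC.2
  have hPDPL : IsPDPLSet p (f' '' K) := hDPL K hKUB hKDP
  -- It suffices to show the image sequence is Cauchy
  suffices h : CauchySeq (fun n => f (x n)) by
    exact cauchySeq_tendsto_of_complete h
  by_contra hnc
  rw [Metric.cauchySeq_iff] at hnc
  push_neg at hnc
  obtain ⟨ε, hε, hnc⟩ := hnc
  -- extract strictly monotone subsequences with distance ≥ ε
  have hpair : ∀ N : ℕ, ∃ q : ℕ × ℕ, N ≤ q.1 ∧ N ≤ q.2 ∧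
      ε ≤ dist (f (x q.1)) (f (x q.2)) := by
    intro N
    obtain ⟨m, hm, n, hn, hd⟩ := hnc N
    exact ⟨(m, n), hm, hn, hd⟩
  choose g hg1 hg2 hg3 using hpair
  let c : ℕ → ℕ × ℕ := fun k => Nat.rec (g 0) (fun _ q => g (max q.1 q.2 + 1)) k
  have hc_succ : ∀ k, c (k + 1) = g (max (c k).1 (c k).2 + 1) := fun k => rfl
  set a : ℕ → ℕ := fun k => (c k).1 with ha_def
  set b : ℕ → ℕ := fun k => (c k).2 with hb_def
  have ha : StrictMono a := by
    apply strictMono_nat_of_lt_succ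
    intro k
    have := hg1 (max (c k).1 (c k).2 + 1)
    calc a k ≤ max (c k).1 (c k).2 := le_max_left _ _
      _ < max (c k).1 (c k).2 + 1 := Nat.lt_succ_self _
      _ ≤ (g (max (c k).1 (c k).2 + 1)).1 := this
      _ = a (k + 1) := rfl
  have hb : StrictMono b := by
    apply strictMono_nat_of_lt_succ
    intro k
    have := hg2 (max (c k).1 (c k).2 + 1)
    calc b k ≤ max (c k).1 (c k).2 := le_max_right _ _
      _ < max (c k).1 (c k).2 + 1 := Nat.lt_succ_self _
      _ ≤ (g (max (c k).1 (c k).2 + 1)).2 := this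
      _ = b (k + 1) := rfl
  have hdge : ∀ k, ε ≤ dist (f (x (a k))) (f (x (b k))) := by
    intro k
    cases k with
    | zero => exact hg3 0
    | succ m => exact hg3 _
  -- the difference sequence is p-Right null
  set z : ℕ → X := fun k => x (a k) - x (b k) with hz_def
  have hzw : WeaklyPSummable p z := hxC.1 a b ha hb
  have hzDP : DunfordPettisSet (Set.range z) := by
    apply DP_mono (DP_sub hxC.2 hxC.2)
    rintro _ ⟨k, rfl⟩
    exact Set.sub_mem_sub (Set.mem_range_self (a k)) (Set.mem_range_self (b k))
  have hzRN : PRightNull p z := ⟨hzw, hzDP⟩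
  obtain ⟨N, hN⟩ := hPDPL z hzRN (ε / 2) (by linarith)
  -- mean value bound
  have key : ∀ k ≥ N, ‖f (x (a k)) - f (x (b k))‖ ≤ ε / 2 := by
    intro k hk
    set v := x (a k) - x (b k) with hv_def
    have hc : ∀ t ∈ Icc (0:ℝ) 1, x (b k) + t • v ∈ K := by
      intro t ht
      have hseg : x (b k) + t • v ∈ segment ℝ (x (b k)) (x (a k)) := by
        rw [segment_eq_image']
        exact ⟨t, ht, rfl⟩
      exact (convex_convexHull ℝ _).segment_subset
        (subset_convexHull ℝ (Set.range x) (Set.mem_range_self (b k)))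
        (subset_convexHull ℝ (Set.range x) (Set.mem_range_self (a k))) hseg
    have hderiv : ∀ t ∈ Icc (0:ℝ) 1,
        HasDerivWithinAt (fun t : ℝ => f (x (b k) + t • v))
          (f' (x (b k) + t • v) v) (Icc 0 1) t := by
      intro t ht
      have h1 : HasDerivAt (fun t : ℝ => x (b k) + t • v) v t := by
        simpa using ((hasDerivAt_id t).smul_const v).const_add (x (b k))
      exact ((hdiff _ (hKU (hc t ht))).comp_hasDerivAt t h1).hasDerivWithinAt
    have hbound : ∀ t ∈ Icc (0:ℝ) 1, ‖f' (x (b k) + t • v) v‖ ≤ ε / 2 := by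
      intro t ht
      have := hN k hk (f' (x (b k) + t • v)) ⟨_, hc t ht, rfl⟩
      exact this.le
    have hm := norm_image_sub_le_of_norm_deriv_le_segment' hderiv
      (fun t ht => hbound t (Ico_subset_Icc_self ht)) 1 (right_mem_Icc.2 zero_le_one)
    have h0 : x (b k) + (0:ℝ) • v = x (b k) := by simp
    have h1 : x (b k) + (1:ℝ) • v = x (a k) := by
      rw [one_smul, hv_def]; abel
    rw [h0, h1] at hm
    simpa using hm
  have := hdge N
  rw [dist_eq_norm] at this
  have := key N le_rfl
  linarith
end

section
/- Let h ∈ C¹(ℝ) and define f : c₀ → ℝ by f((x_n)) = Σ_{n=1}^∞ h(x_n)/2ⁿ. Then f is well-defined, Fréchet differentiable, and its derivative f′((x_n)) = (h′(x_n)/2ⁿ)ₙ ∈ ℓ₁ defines a compact mapping f′ : c₀ → ℓ₁ = L(c₀, ℝ), i.e., f′ maps bounded subsets of c₀ to relatively compact subsets of ℓ₁. -/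
set_option maxHeartbeats 1000000
set_option synthInstance.maxHeartbeats 400000


open Filter Topology Metric Set

namespace Stmt8Aux

open ZeroAtInfty

lemma coe_norm (z : C₀(ℕ, ℝ)) (n : ℕ) : |z n| ≤ ‖z‖ := by
  have := z.toBCF.norm_coe_le_norm n
  rwa [ZeroAtInftyContinuousMap.norm_toBCF_eq_norm, Real.norm_eq_abs] at this

lemma exists_bound (g : ℝ → ℝ) (hg : Continuous g) (R : ℝ) :
    ∃ M, 0 ≤ M ∧ ∀ s : ℝ, |s| ≤ R → |g s| ≤ M := by
  obtain ⟨M, hM⟩ := (isCompact_Icc (a := -R) (b := R)).exists_bound_of_continuousOn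
    hg.continuousOn
  refine ⟨max M 0, le_max_right _ _, fun s hs => ?_⟩
  have := hM s ⟨(abs_le.mp hs).1, (abs_le.mp hs).2⟩
  rw [Real.norm_eq_abs] at this
  exact this.trans (le_max_left _ _)

lemma summable_geo (C : ℝ) : Summable fun n : ℕ => C / 2 ^ (n + 1) := by
  have : (fun n : ℕ => C / 2 ^ (n + 1)) = fun n : ℕ => (C / 2) * (1 / 2 : ℝ) ^ n := by
    ext n
    rw [pow_succ, div_pow, one_pow, div_mul_eq_div_div_swap, div_div]
    rw [div_mul_div_comm, mul_one]
  rw [this]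
  exact (summable_geometric_of_lt_one (by norm_num) (by norm_num)).mul_left _

lemma tsum_geo : ∑' n : ℕ, (1 : ℝ) / 2 ^ (n + 1) = 1 := by
  have h2 : ∑' n : ℕ, (1 / 2 : ℝ) ^ n = 2 := by
    rw [tsum_geometric_of_lt_one (by norm_num) (by norm_num)]; norm_num
  have : (fun n : ℕ => (1 : ℝ) / 2 ^ (n + 1)) = fun n : ℕ => (1 / 2) * (1 / 2 : ℝ) ^ n := by
    ext n
    rw [pow_succ, div_pow, one_pow, div_mul_eq_div_div_swap, div_div]
    rw [div_mul_div_comm, mul_one]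
  rw [this, tsum_mul_left, h2]; norm_num

lemma tsum_const_geo (C : ℝ) : ∑' n : ℕ, C / 2 ^ (n + 1) = C := by
  have : (fun n : ℕ => C / 2 ^ (n + 1)) = fun n : ℕ => C * ((1 : ℝ) / 2 ^ (n + 1)) :=
    funext fun n => (mul_one_div _ _).symm
  rw [this, tsum_mul_left, tsum_geo, mul_one]

lemma summable_mul (a : ℕ → ℝ) (ha : Summable fun n => |a n|) (y : C₀(ℕ, ℝ)) :
    Summable fun n => a n * y n := by
  refine Summable.of_norm (Summable.of_nonneg_of_le (fun n => norm_nonneg _)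
    (fun n => ?_) (ha.mul_right ‖y‖))
  rw [norm_mul, Real.norm_eq_abs, Real.norm_eq_abs]
  exact mul_le_mul_of_nonneg_left (coe_norm y n) (abs_nonneg _)

lemma summable_norm_mul (a : ℕ → ℝ) (ha : Summable fun n => |a n|) (y : C₀(ℕ, ℝ)) :
    Summable fun n => ‖a n * y n‖ := by
  refine Summable.of_nonneg_of_le (fun n => norm_nonneg _) (fun n => ?_) (ha.mul_right ‖y‖)
  rw [norm_mul, Real.norm_eq_abs, Real.norm_eq_abs]
  exact mul_le_mul_of_nonneg_left (coe_norm y n) (abs_nonneg _)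

noncomputable def clmOf (a : ℕ → ℝ) (ha : Summable fun n => |a n|) :
    C₀(ℕ, ℝ) →L[ℝ] ℝ :=
  LinearMap.mkContinuous
    { toFun := fun y => ∑' n, a n * y n
      map_add' := fun y z => by
        rw [← Summable.tsum_add (summable_mul a ha y) (summable_mul a ha z)]
        exact tsum_congr fun n => by simp [mul_add]
      map_smul' := fun c y => by
        simp only [RingHom.id_apply, smul_eq_mul, ← tsum_mul_left]
        exact tsum_congr fun n => by simp; ring }
    (∑' n, |a n|)
    (fun y => by
      simp only [LinearMap.coe_mk, AddHom.coe_mk]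
      calc ‖∑' n, a n * y n‖ ≤ ∑' n, ‖a n * y n‖ :=
            norm_tsum_le_tsum_norm (summable_norm_mul a ha y)
        _ ≤ ∑' n, |a n| * ‖y‖ := by
            refine Summable.tsum_le_tsum (fun n => ?_) (summable_norm_mul a ha y) (ha.mul_right ‖y‖)
            rw [norm_mul, Real.norm_eq_abs, Real.norm_eq_abs]
            exact mul_le_mul_of_nonneg_left (coe_norm y n) (abs_nonneg _)
        _ = (∑' n, |a n|) * ‖y‖ := tsum_mul_right)

@[simp] lemma clmOf_apply (a : ℕ → ℝ) (ha : Summable fun n => |a n|) (y : C₀(ℕ, ℝ)) :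
    clmOf a ha y = ∑' n, a n * y n := rfl

noncomputable def ev (n : ℕ) : C₀(ℕ, ℝ) →L[ℝ] ℝ :=
  LinearMap.mkContinuous
    { toFun := fun y => y n
      map_add' := fun y z => by simp
      map_smul' := fun c y => by simp }
    1 (fun y => by simpa [Real.norm_eq_abs] using coe_norm y n)

@[simp] lemma ev_apply (n : ℕ) (y : C₀(ℕ, ℝ)) : ev n y = y n := rfl

lemma summable_comp (g : ℝ → ℝ) (hg : Continuous g) (z : C₀(ℕ, ℝ)) :
    Summable fun n => |g (z n) / 2 ^ (n + 1)| := by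
  obtain ⟨M, hM0, hM⟩ := exists_bound g hg ‖z‖
  refine Summable.of_nonneg_of_le (fun n => abs_nonneg _) (fun n => ?_) (summable_geo M)
  rw [abs_div, abs_pow, abs_two]
  gcongr
  exact hM _ (coe_norm z n)

lemma key (h : ℝ → ℝ) (hh : ContDiff ℝ 1 h) (x : C₀(ℕ, ℝ)) {ε : ℝ} (hε : 0 < ε) :
    ∃ δ > 0, ∀ t : C₀(ℕ, ℝ), ‖t‖ < δ → ∀ n : ℕ,
      |h (x n + t n) - h (x n) - deriv h (x n) * t n| ≤ ε * |t n| := by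
  have hd : Differentiable ℝ h := hh.differentiable one_ne_zero
  have hc : Continuous (deriv h) := hh.continuous_deriv le_rfl
  have hK : IsCompact (Icc (-(‖x‖ + 1)) (‖x‖ + 1)) := isCompact_Icc
  have huc : UniformContinuousOn (deriv h) (Icc (-(‖x‖ + 1)) (‖x‖ + 1)) :=
    hK.uniformContinuousOn_of_continuous hc.continuousOn
  rw [Metric.uniformContinuousOn_iff] at huc
  obtain ⟨δ₀, hδ₀, hucd⟩ := huc ε hε
  refine ⟨min δ₀ 1, lt_min hδ₀ one_pos, fun t ht n => ?_⟩
  set a := x n with ha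
  set u := t n with hu
  have hxa : |a| ≤ ‖x‖ := coe_norm x n
  have hut : |u| ≤ ‖t‖ := coe_norm t n
  have hu1 : |u| ≤ 1 := hut.trans (ht.le.trans (min_le_right _ _))
  have huδ : |u| < δ₀ := lt_of_le_of_lt hut (lt_of_lt_of_le ht (min_le_left _ _))
  have haK : a ∈ Icc (-(‖x‖ + 1)) (‖x‖ + 1) := by
    rw [mem_Icc, ← abs_le]
    linarith
  have hball : ∀ c ∈ Metric.closedBall a |u|, c ∈ Icc (-(‖x‖ + 1)) (‖x‖ + 1) := by
    intro c hc'
    rw [Metric.mem_closedBall, Real.dist_eq] at hc'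
    rw [mem_Icc, ← abs_le]
    calc |c| ≤ |a| + |c - a| := by
          have := abs_sub_abs_le_abs_sub c a
          linarith [abs_nonneg (c - a)]
      _ ≤ ‖x‖ + 1 := add_le_add hxa (hc'.trans hu1)
  have hderiv : ∀ c ∈ Metric.closedBall a |u|,
      HasDerivWithinAt (fun s => h s - deriv h a * s) (deriv h c - deriv h a)
        (Metric.closedBall a |u|) c := by
    intro c _
    have h1 : HasDerivAt h (deriv h c) c := (hd c).hasDerivAt
    have h2 : HasDerivAt (fun s => deriv h a * s) (deriv h a) c := by
      simpa using (hasDerivAt_id c).const_mul (deriv h a)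
    exact (h1.sub h2).hasDerivWithinAt
  have hbound : ∀ c ∈ Metric.closedBall a |u|, ‖deriv h c - deriv h a‖ ≤ ε := by
    intro c hc'
    have hcK := hball c hc'
    rw [Metric.mem_closedBall, Real.dist_eq] at hc'
    have hd' : dist c a < δ₀ := by rw [Real.dist_eq]; exact lt_of_le_of_lt hc' huδ
    have := hucd c hcK a haK hd'
    rw [Real.dist_eq] at this
    exact le_of_lt this
  have hconv : Convex ℝ (Metric.closedBall a |u|) := convex_closedBall _ _
  have hmem1 : a ∈ Metric.closedBall a |u| := Metric.mem_closedBall_self (abs_nonneg u)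
  have hmem2 : a + u ∈ Metric.closedBall a |u| := by
    rw [Metric.mem_closedBall, Real.dist_eq]; simp
  have := hconv.norm_image_sub_le_of_norm_hasDerivWithin_le hderiv hbound hmem1 hmem2
  rw [Real.norm_eq_abs, Real.norm_eq_abs] at this
  have heq : h (a + u) - deriv h a * (a + u) - (h a - deriv h a * a)
      = h (a + u) - h a - deriv h a * u := by ring
  rw [heq] at this
  simpa using this

variable (h : ℝ → ℝ) (hh : ContDiff ℝ 1 h)

noncomputable def fd (x : C₀(ℕ, ℝ)) : C₀(ℕ, ℝ) →L[ℝ] ℝ :=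
  clmOf (fun n => deriv h (x n) / 2 ^ (n + 1))
    (summable_comp (deriv h) (hh.continuous_deriv le_rfl) x)

lemma fd_hasFDerivAt (x : C₀(ℕ, ℝ)) :
    HasFDerivAt (fun z : C₀(ℕ, ℝ) => ∑' n : ℕ, h (z n) / 2 ^ (n + 1)) (fd h hh x) x := by
  have hhC : Continuous h := hh.continuous
  rw [hasFDerivAt_iff_isLittleO_nhds_zero, Asymptotics.isLittleO_iff]
  intro c hc
  obtain ⟨δ, hδ, hkey⟩ := key h hh x hc
  rw [Metric.eventually_nhds_iff]
  refine ⟨δ, hδ, fun t ht => ?_⟩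
  rw [dist_zero_right] at ht
  have hadd : ∀ n : ℕ, ((x + t) : C₀(ℕ, ℝ)) n = x n + t n := fun n => rfl
  have s1 : Summable fun n => h (x n + t n) / 2 ^ (n + 1) := by
    have := (summable_comp h hhC (x + t)).of_abs
    simpa [hadd] using this
  have s2 : Summable fun n => h (x n) / 2 ^ (n + 1) :=
    (summable_comp h hhC x).of_abs
  have s3 : Summable fun n => deriv h (x n) / 2 ^ (n + 1) * t n :=
    summable_mul _ (summable_comp (deriv h) (hh.continuous_deriv le_rfl) x) t
  have hsplit : (fun n => h (x n + t n) / 2 ^ (n + 1) - h (x n) / 2 ^ (n + 1)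
      - deriv h (x n) / 2 ^ (n + 1) * t n)
      = fun n => (h (x n + t n) - h (x n) - deriv h (x n) * t n) / 2 ^ (n + 1) :=
    funext fun n => by ring
  have hEb : ∀ n : ℕ, ‖(h (x n + t n) - h (x n) - deriv h (x n) * t n) / 2 ^ (n + 1)‖
      ≤ (c * ‖t‖) / 2 ^ (n + 1) := by
    intro n
    rw [Real.norm_eq_abs, abs_div, abs_pow, abs_two]
    gcongr
    calc |h (x n + t n) - h (x n) - deriv h (x n) * t n| ≤ c * |t n| := hkey t ht n
      _ ≤ c * ‖t‖ := mul_le_mul_of_nonneg_left (coe_norm t n) hc.le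
  have sE : Summable fun n => ‖(h (x n + t n) - h (x n) - deriv h (x n) * t n) / 2 ^ (n + 1)‖ :=
    Summable.of_nonneg_of_le (fun n => norm_nonneg _) hEb (summable_geo (c * ‖t‖))
  have hmain : (∑' n : ℕ, h ((x + t) n) / 2 ^ (n + 1)) - (∑' n : ℕ, h (x n) / 2 ^ (n + 1))
      - fd h hh x t
      = ∑' n : ℕ, (h (x n + t n) - h (x n) - deriv h (x n) * t n) / 2 ^ (n + 1) := by
    have : fd h hh x t = ∑' n : ℕ, deriv h (x n) / 2 ^ (n + 1) * t n := rfl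
    rw [this]
    simp only [hadd]
    rw [← Summable.tsum_sub s1 s2, ← Summable.tsum_sub (s1.sub s2) s3, ← hsplit]
  calc ‖(∑' n : ℕ, h ((x + t) n) / 2 ^ (n + 1)) - (∑' n : ℕ, h (x n) / 2 ^ (n + 1))
        - fd h hh x t‖
      = ‖∑' n : ℕ, (h (x n + t n) - h (x n) - deriv h (x n) * t n) / 2 ^ (n + 1)‖ := by
        rw [hmain]
    _ ≤ ∑' n : ℕ, ‖(h (x n + t n) - h (x n) - deriv h (x n) * t n) / 2 ^ (n + 1)‖ :=
        norm_tsum_le_tsum_norm sE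
    _ ≤ ∑' n : ℕ, (c * ‖t‖) / 2 ^ (n + 1) := Summable.tsum_le_tsum hEb sE (summable_geo _)
    _ = c * ‖t‖ := tsum_const_geo _

end Stmt8Aux

namespace Stmt8Aux
open ZeroAtInfty

lemma fd_compact (h : ℝ → ℝ) (hh : ContDiff ℝ 1 h) (B : Set C₀(ℕ, ℝ))
    (hB : Bornology.IsBounded B) : IsCompact (closure (fd h hh '' B)) := by
  classical
  have hc : Continuous (deriv h) := hh.continuous_deriv le_rfl
  obtain ⟨R, hR⟩ := hB.subset_closedBall 0
  obtain ⟨M, hM0, hM⟩ := exists_bound (deriv h) hc R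
  set K : Set (ℕ → ℝ) := Set.pi univ (fun _ => Icc (-M) M) with hKdef
  have hKc : IsCompact K := isCompact_univ_pi fun _ => isCompact_Icc
  have hsumK : ∀ a : ℕ → ℝ, a ∈ K → Summable fun n => |a n / 2 ^ (n + 1)| := by
    intro a haK
    refine Summable.of_nonneg_of_le (fun n => abs_nonneg _) (fun n => ?_) (summable_geo M)
    rw [abs_div, abs_pow, abs_two]
    gcongr
    exact abs_le.mpr (haK n (mem_univ n))
  set Φ : (ℕ → ℝ) → (C₀(ℕ, ℝ) →L[ℝ] ℝ) := fun a =>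
    if ha : Summable fun n => |a n / 2 ^ (n + 1)| then clmOf _ ha else 0 with hΦdef
  set F : ℕ → (ℕ → ℝ) → (C₀(ℕ, ℝ) →L[ℝ] ℝ) := fun N a =>
    ∑ n ∈ Finset.range N, (a n / 2 ^ (n + 1)) • ev n with hFdef
  haveI iTAG : IsTopologicalAddGroup (C₀(ℕ, ℝ) →L[ℝ] ℝ) := inferInstance
  haveI : ContinuousAdd (C₀(ℕ, ℝ) →L[ℝ] ℝ) := iTAG.toContinuousAdd
  have hFc : ∀ N, Continuous (F N) := fun N =>
    continuous_finset_sum _ fun n _ => ((continuous_apply n).div_const _).smul continuous_const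
  have hdiff : ∀ a ∈ K, ∀ N : ℕ, ‖Φ a - F N a‖ ≤ M * (1 / 2 : ℝ) ^ N := by
    intro a haK N
    refine ContinuousLinearMap.opNorm_le_bound _ (by positivity) fun y => ?_
    have hsa := hsumK a haK
    have hs : Summable fun n => a n / 2 ^ (n + 1) * y n := summable_mul _ hsa y
    have hΦa : Φ a y = ∑' n, a n / 2 ^ (n + 1) * y n := by
      simp only [hΦdef]; rw [dif_pos hsa]; rfl
    have hFa : F N a y = ∑ n ∈ Finset.range N, a n / 2 ^ (n + 1) * y n := by
      simp only [hFdef]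
      simp [ContinuousLinearMap.sum_apply]
    have hval : (Φ a - F N a) y = ∑' i, a (i + N) / 2 ^ (i + N + 1) * y (i + N) := by
      rw [ContinuousLinearMap.sub_apply, hΦa, hFa, ← Summable.sum_add_tsum_nat_add N hs]
      ring
    rw [hval]
    have hterm : ∀ i : ℕ, ‖a (i + N) / 2 ^ (i + N + 1) * y (i + N)‖
        ≤ (M * ‖y‖ * (1 / 2 : ℝ) ^ N) / 2 ^ (i + 1) := by
      intro i
      rw [norm_mul, Real.norm_eq_abs, Real.norm_eq_abs, abs_div, abs_pow, abs_two]
      have h1 : |a (i + N)| ≤ M := abs_le.mpr (haK (i + N) (mem_univ _))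
      have h2 : |y (i + N)| ≤ ‖y‖ := coe_norm y (i + N)
      have h3 : (2 : ℝ) ^ (i + N + 1) = 2 ^ (i + 1) * 2 ^ N := by ring
      calc |a (i + N)| / 2 ^ (i + N + 1) * |y (i + N)|
          ≤ M / 2 ^ (i + N + 1) * ‖y‖ := by gcongr
        _ = (M * ‖y‖ * (1 / 2 : ℝ) ^ N) / 2 ^ (i + 1) := by
            rw [h3, div_pow, one_pow]
            rw [div_mul_eq_mul_div, mul_one_div, div_div,
              mul_comm ((2:ℝ) ^ (i + 1)) ((2:ℝ) ^ N)]
    calc ‖∑' i, a (i + N) / 2 ^ (i + N + 1) * y (i + N)‖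
        ≤ ∑' i, (M * ‖y‖ * (1 / 2 : ℝ) ^ N) / 2 ^ (i + 1) := by
          refine (norm_tsum_le_tsum_norm ?_).trans (Summable.tsum_le_tsum hterm ?_ (summable_geo _))
          · exact Summable.of_nonneg_of_le (fun i => norm_nonneg _) hterm (summable_geo _)
          · exact Summable.of_nonneg_of_le (fun i => norm_nonneg _) hterm (summable_geo _)
      _ = M * ‖y‖ * (1 / 2 : ℝ) ^ N := tsum_const_geo _
      _ = M * (1 / 2 : ℝ) ^ N * ‖y‖ := by ring
  have hdist : ∀ ε > 0, ∀ᶠ N in atTop, ∀ a ∈ K, dist (Φ a) (F N a) < ε := by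
    intro ε hε
    have htend : Tendsto (fun N : ℕ => M * (1 / 2 : ℝ) ^ N) atTop (nhds 0) := by
      simpa using (tendsto_pow_atTop_nhds_zero_of_lt_one (by norm_num : (0:ℝ) ≤ 1/2)
        (by norm_num)).const_mul M
    filter_upwards [htend.eventually (gt_mem_nhds hε)] with N hN a haK
    have hde : dist (Φ a) (F N a) = ‖Φ a - F N a‖ := dist_eq_norm (E := C₀(ℕ, ℝ) →L[ℝ] ℝ) (Φ a) (F N a)
    exact lt_of_le_of_lt (le_of_eq_of_le hde (hdiff a haK N)) hN
  have hΦc : ContinuousOn Φ K :=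
    (Metric.tendstoUniformlyOn_iff.mpr hdist).continuousOn
      (Frequently.of_forall fun N => (hFc N).continuousOn)
  have himg : fd h hh '' B ⊆ Φ '' K := by
    rintro _ ⟨x, hxB, rfl⟩
    have hxR : ‖x‖ ≤ R := mem_closedBall_zero_iff.mp (hR hxB)
    have hmem : (fun n => deriv h (x n)) ∈ K := by
      intro n _
      rw [mem_Icc, ← abs_le]
      exact hM _ ((coe_norm x n).trans hxR)
    refine ⟨fun n => deriv h (x n), hmem, ?_⟩
    simp only [hΦdef]
    rw [dif_pos (hsumK _ hmem)]
    rfl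
  have hcompact : IsCompact (Φ '' K) := hKc.image_of_continuousOn hΦc
  exact hcompact.of_isClosed_subset isClosed_closure (closure_minimal himg hcompact.isClosed)

end Stmt8Aux

open ZeroAtInfty in
theorem stmt8 (h : ℝ → ℝ) (hh : ContDiff ℝ 1 h) :
    ∃ f' : C₀(ℕ, ℝ) → (C₀(ℕ, ℝ) →L[ℝ] ℝ),
      (∀ x : C₀(ℕ, ℝ),
        HasFDerivAt (fun z : C₀(ℕ, ℝ) => ∑' n : ℕ, h (z n) / 2 ^ (n + 1)) (f' x) x) ∧
      (∀ x y : C₀(ℕ, ℝ), f' x y = ∑' n : ℕ, deriv h (x n) * y n / 2 ^ (n + 1)) ∧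
      (∀ x : C₀(ℕ, ℝ), Memℓp (fun n : ℕ => deriv h (x n) / 2 ^ (n + 1)) 1) ∧
      (∀ B : Set C₀(ℕ, ℝ), Bornology.IsBounded B → IsCompact (closure (f' '' B))) := by
  refine ⟨Stmt8Aux.fd h hh, fun x => Stmt8Aux.fd_hasFDerivAt h hh x, fun x y => ?_, fun x => ?_,
    fun B hB => Stmt8Aux.fd_compact h hh B hB⟩
  · show (∑' n : ℕ, deriv h (x n) / 2 ^ (n + 1) * y n) = _
    exact tsum_congr fun n => by ring
  · refine memℓp_gen ?_
    refine Summable.congr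
      (Stmt8Aux.summable_comp (deriv h) (hh.continuous_deriv le_rfl) x) fun n => ?_
    simp [Real.norm_eq_abs, ENNReal.toReal_one, Real.rpow_one, abs_div, abs_pow, abs_two]
end

section
/- Every weakly compact operator T : X → c₀ is Dunford–Pettis p-convergent for every 1 ≤ p ≤ ∞. -/
open Filter Topology Metric Set

section Aux

open ZeroAtInfty

/-- Evaluation at a point, as a continuous linear functional on `C₀(ℕ, ℝ)`. -/
noncomputable def evC0 (k : ℕ) : C₀(ℕ, ℝ) →L[ℝ] ℝ :=
  LinearMap.mkContinuous
    { toFun := fun f => f k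
      map_add' := fun f g => rfl
      map_smul' := fun c f => rfl } 1
    (fun f => by
      simp only [LinearMap.coe_mk, AddHom.coe_mk, one_mul]
      calc ‖f k‖ = ‖f.toBCF k‖ := rfl
        _ ≤ ‖f.toBCF‖ := BoundedContinuousFunction.norm_coe_le_norm _ _
        _ = ‖f‖ := ZeroAtInftyContinuousMap.norm_toBCF_eq_norm)

@[simp] lemma evC0_apply (k : ℕ) (f : C₀(ℕ, ℝ)) : evC0 k f = f k := rfl

lemma exists_coord {y : C₀(ℕ, ℝ)} {c : ℝ} (hc : 0 ≤ c) (h : c < ‖y‖) :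
    ∃ k, c < |y k| := by
  by_contra hk
  push_neg at hk
  have : ‖y‖ ≤ c := by
    rw [← ZeroAtInftyContinuousMap.norm_toBCF_eq_norm]
    exact (BoundedContinuousFunction.norm_le hc).mpr
      (fun k => by simpa [Real.norm_eq_abs] using hk k)
  linarith

/-- Approximate Helly-type lemma / finite-dimensional Goldstine. -/
lemma helly_approx {X : Type*} [NormedAddCommGroup X] [NormedSpace ℝ X]
    (F : (X →L[ℝ] ℝ) →L[ℝ] ℝ) (hF : ‖F‖ < 1) {m : ℕ} (f : Fin m → (X →L[ℝ] ℝ))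
    {η : ℝ} (hη : 0 < η) :
    ∃ x : X, ‖x‖ ≤ 1 ∧ ∀ i, |f i x - F (f i)| < η := by
  by_contra hcon
  push_neg at hcon
  set R : X →L[ℝ] (Fin m → ℝ) := ContinuousLinearMap.pi f with hR
  set C : Set (Fin m → ℝ) := R '' Metric.closedBall (0 : X) 1 with hC
  set v : Fin m → ℝ := fun i => F (f i) with hv
  have hvC : v ∉ closure C := by
    intro hmem
    obtain ⟨w, hwC, hdist⟩ := Metric.mem_closure_iff.1 hmem η hη
    obtain ⟨x, hx, rfl⟩ := hwC
    have hx1 : ‖x‖ ≤ 1 := by simpa [dist_eq_norm] using hx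
    obtain ⟨i, hi⟩ := hcon x hx1
    have h2 := (dist_pi_lt_iff hη).1 hdist i
    rw [Real.dist_eq] at h2
    have hri : R x i = f i x := rfl
    rw [abs_sub_comm] at h2
    rw [hri] at h2
    exact absurd h2 (not_lt.2 hi)
  have hconv : Convex ℝ (closure C) := by
    have h1 : Convex ℝ C := by
      have := (convex_closedBall (0 : X) 1).linear_image (R : X →ₗ[ℝ] (Fin m → ℝ))
      simpa [hC] using this
    exact h1.closure
  obtain ⟨φ, u, hu1, hu2⟩ :=
    geometric_hahn_banach_closed_point hconv isClosed_closure hvC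
  classical
  set c : Fin m → ℝ := fun i => φ (fun j => if i = j then 1 else 0) with hcdef
  have hφ : ∀ w : Fin m → ℝ, φ w = ∑ i, w i * c i := by
    intro w
    conv_lhs => rw [pi_eq_sum_univ w, map_sum]
    refine Finset.sum_congr rfl fun i _ => ?_
    rw [map_smul]
    simp [hcdef, smul_eq_mul]
  set g : X →L[ℝ] ℝ := ∑ i, c i • f i with hgdef
  have hgx : ∀ x : X, g x = φ (R x) := by
    intro x
    rw [hφ (R x)]
    simp only [hgdef, ContinuousLinearMap.sum_apply, ContinuousLinearMap.coe_smul',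
      Pi.smul_apply, smul_eq_mul]
    refine Finset.sum_congr rfl fun i _ => ?_
    have : R x i = f i x := rfl
    rw [this, mul_comm]
  have hFg : F g = φ v := by
    rw [hφ v]
    simp only [hgdef, map_sum, map_smul, smul_eq_mul, hv]
    refine Finset.sum_congr rfl fun i _ => mul_comm _ _
  have hupos : 0 < u := by
    have h0 : (0 : Fin m → ℝ) ∈ C := ⟨0, by simp, by simp⟩
    have := hu1 0 (subset_closure h0)
    simpa using this
  have hgu : ∀ x : X, ‖x‖ ≤ 1 → g x < u := by
    intro x hx
    rw [hgx x]
    exact hu1 (R x) (subset_closure ⟨x, by simpa [dist_eq_norm] using hx, rfl⟩)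
  have hnorm : ‖g‖ ≤ u := by
    apply ContinuousLinearMap.opNorm_le_bound _ hupos.le
    intro x
    rcases eq_or_ne x 0 with rfl | hx0
    · simp
    · have hxn : 0 < ‖x‖ := norm_pos_iff.2 hx0
      set y : X := ‖x‖⁻¹ • x with hy
      have hyn : ‖y‖ ≤ 1 := by
        rw [hy, norm_smul, Real.norm_eq_abs, abs_of_pos (inv_pos.2 hxn),
          inv_mul_cancel₀ hxn.ne']
      have h1 : g y < u := hgu y hyn
      have h2 : -u < g y := by
        have := hgu (-y) (by simpa using hyn)
        rw [map_neg] at this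
        linarith
      have h3 : |g y| ≤ u := abs_le.2 ⟨h2.le, h1.le⟩
      have hxy : g x = ‖x‖ * g y := by
        rw [hy, map_smul, smul_eq_mul, ← mul_assoc, mul_inv_cancel₀ hxn.ne', one_mul]
      rw [hxy, Real.norm_eq_abs, abs_mul, abs_of_pos hxn, mul_comm]
      exact mul_le_mul_of_nonneg_right h3 hxn.le |>.trans (by rw [mul_comm])
  have hlt : u < F g := hFg ▸ hu2
  have hle : F g ≤ ‖F‖ * ‖g‖ :=
    le_trans (le_abs_self _) (by simpa [Real.norm_eq_abs] using F.le_opNorm g)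
  nlinarith [norm_nonneg F, norm_nonneg g]

/-- If `T` is weakly compact then the functionals `evC0 k ∘ T` form a weakly null
sequence in the dual of `X`. -/
lemma coord_null {X : Type*} [NormedAddCommGroup X] [NormedSpace ℝ X]
    (T : X →L[ℝ] C₀(ℕ, ℝ))
    (hT : IsCompact (closure ((toWeakSpace ℝ C₀(ℕ, ℝ)) '' (T '' Metric.closedBall 0 1))))
    (F : (X →L[ℝ] ℝ) →L[ℝ] ℝ) (hF : ‖F‖ < 1) :
    Tendsto (fun k => F ((evC0 k).comp T)) atTop (nhds 0) := by
  set a : ℕ → ℝ := fun k => F ((evC0 k).comp T) with ha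
  by_contra hcon
  rw [Metric.tendsto_atTop] at hcon
  push_neg at hcon
  obtain ⟨ε, hε, hfreq⟩ := hcon
  obtain ⟨φ, hφmono, hφ⟩ := extraction_of_frequently_atTop (frequently_atTop.2 hfreq)
  have hφ' : ∀ j, ε ≤ |a (φ j)| := by
    intro j
    have := hφ j
    rwa [Real.dist_eq, sub_zero] at this
  set D := closure ((toWeakSpace ℝ C₀(ℕ, ℝ)) '' (T '' Metric.closedBall 0 1)) with hD
  set S : ℕ → Set (WeakSpace ℝ C₀(ℕ, ℝ)) :=
    fun j => {w | ε / 2 ≤ |evC0 (φ j) ((toWeakSpace ℝ C₀(ℕ, ℝ)).symm w)|} with hS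
  have hScl : ∀ j, IsClosed (S j) := by
    intro j
    have hc : Continuous fun w : WeakSpace ℝ C₀(ℕ, ℝ) =>
        evC0 (φ j) ((toWeakSpace ℝ C₀(ℕ, ℝ)).symm w) :=
      WeakBilin.eval_continuous ((topDualPairing ℝ C₀(ℕ, ℝ)).flip) (evC0 (φ j))
    exact isClosed_le continuous_const hc.abs
  set E : ℕ → Set (WeakSpace ℝ C₀(ℕ, ℝ)) := fun m => D ∩ ⋂ j ≤ m, S j with hE
  have hEcl : ∀ m, IsClosed (E m) :=
    fun m => isClosed_closure.inter (isClosed_biInter fun j _ => hScl j)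
  have hEsub : ∀ m, E (m + 1) ⊆ E m := by
    intro m
    apply inter_subset_inter_right
    exact biInter_subset_biInter_left fun j (hj : j ≤ m) => hj.trans (Nat.le_succ m)
  have hEne : ∀ m, (E m).Nonempty := by
    intro m
    obtain ⟨x, hx1, hx2⟩ :=
      helly_approx F hF (fun i : Fin (m + 1) => (evC0 (φ i)).comp T) (half_pos hε)
    refine ⟨toWeakSpace ℝ C₀(ℕ, ℝ) (T x), ?_, ?_⟩
    · exact subset_closure ⟨T x, ⟨x, by simpa [dist_eq_norm] using hx1, rfl⟩, rfl⟩
    · rw [mem_iInter₂]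
      intro j hj
      have hx2' := hx2 ⟨j, Nat.lt_succ_of_le hj⟩
      simp only [ContinuousLinearMap.comp_apply, evC0_apply] at hx2'
      have htri := abs_sub_abs_le_abs_sub (a (φ j)) ((T x) (φ j))
      rw [abs_sub_comm] at htri
      have h1 := hφ' j
      simp only [hS, mem_setOf_eq, LinearEquiv.symm_apply_apply, evC0_apply]
      have : |(T x) (φ j) - a (φ j)| < ε / 2 := hx2'
      linarith
  have hwne : (⋂ m, E m).Nonempty := by
    refine IsCompact.nonempty_iInter_of_sequence_nonempty_isCompact_isClosed E hEsub hEne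
      ?_ hEcl
    exact hT.of_isClosed_subset (hEcl 0) inter_subset_left
  obtain ⟨w, hw⟩ := hwne
  set y : C₀(ℕ, ℝ) := (toWeakSpace ℝ C₀(ℕ, ℝ)).symm w with hy
  have hyj : ∀ j, ε / 2 ≤ |y (φ j)| := by
    intro j
    have h1 : w ∈ E j := mem_iInter.1 hw j
    have h2 := h1.2
    rw [mem_iInter₂] at h2
    have := h2 j le_rfl
    simpa [hS, hy] using this
  have hfin : {k | ε / 2 ≤ |y k|}.Finite := by
    have h0 : Tendsto y (cocompact ℕ) (nhds 0) := zero_at_infty y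
    rw [cocompact_eq_cofinite] at h0
    have h1 := Metric.tendsto_nhds.1 h0 (ε / 2) (half_pos hε)
    rw [eventually_cofinite] at h1
    refine h1.subset ?_
    intro k hk
    simp only [mem_setOf_eq, Real.dist_eq, sub_zero, not_lt]
    exact hk
  have hsub : Set.range φ ⊆ {k | ε / 2 ≤ |y k|} := by
    rintro _ ⟨j, rfl⟩
    exact hyj j
  exact (Set.infinite_range_of_injective hφmono.injective) (hfin.subset hsub)

end Aux

open ZeroAtInfty in
theorem stmt17 {X : Type*} [NormedAddCommGroup X] [NormedSpace ℝ X] [CompleteSpace X]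
    (T : X →L[ℝ] C₀(ℕ, ℝ))
    (hT : RelWeaklyCompact (T '' Metric.closedBall 0 1)) :
    ∀ p : ENNReal, 1 ≤ p → DPpConvergent p T := by
  intro p hp x hx
  have hx' : WeaklyPSummable p x ∧ DunfordPettisSet (Set.range x) := hx
  obtain ⟨hws, hDPb, hDP⟩ := hx'
  have hp0 : p ≠ 0 := by
    intro h
    rw [h] at hp
    exact absurd hp (by simp)
  -- the sequence is weakly null
  have hwn : ∀ f : X →L[ℝ] ℝ, Tendsto (fun n => f (x n)) atTop (nhds 0) := by
    intro f
    by_cases hpt : p = ⊤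
    · have hws' : ∀ f : X →L[ℝ] ℝ, Tendsto (fun n => f (x n)) atTop (nhds 0) := by
        unfold WeaklyPSummable at hws
        rwa [if_pos hpt] at hws
      exact hws' f
    · have hws' : ∀ f : X →L[ℝ] ℝ, Memℓp (fun n => f (x n)) p := by
        unfold WeaklyPSummable at hws
        rwa [if_neg hpt] at hws
      have hq : 0 < p.toReal := ENNReal.toReal_pos hp0 hpt
      have hsum : Summable fun n => ‖f (x n)‖ ^ p.toReal := (memℓp_gen_iff hq).1 (hws' f)
      have h1 : Tendsto (fun n => ‖f (x n)‖ ^ p.toReal) atTop (nhds 0) :=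
        hsum.tendsto_atTop_zero
      have h2 : Tendsto (fun n => (‖f (x n)‖ ^ p.toReal) ^ (1 / p.toReal)) atTop (nhds 0) := by
        have h3 := h1.rpow_const (p := 1 / p.toReal) (Or.inr (by positivity))
        simpa [one_div, Real.zero_rpow (show p.toReal⁻¹ ≠ 0 by positivity)] using h3
      have h3 : (fun n => (‖f (x n)‖ ^ p.toReal) ^ (1 / p.toReal)) = fun n => ‖f (x n)‖ := by
        funext n
        rw [← Real.rpow_mul (norm_nonneg _), mul_one_div_cancel hq.ne', Real.rpow_one]
      rw [h3] at h2
      exact tendsto_zero_iff_norm_tendsto_zero.2 h2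
  by_contra hcon
  rw [Metric.tendsto_atTop] at hcon
  push_neg at hcon
  obtain ⟨ε, hε, hfreq⟩ := hcon
  obtain ⟨φ, hφmono, hφ⟩ := extraction_of_frequently_atTop (frequently_atTop.2 hfreq)
  have hφ' : ∀ j, ε ≤ ‖T (x (φ j))‖ := by
    intro j
    have := hφ j
    rwa [Real.dist_eq, sub_zero, abs_norm] at this
  have hex : ∀ j, ∃ k, ε / 2 < |(T (x (φ j))) k| := fun j =>
    exists_coord (by positivity) (lt_of_lt_of_le (half_lt_self hε) (hφ' j))
  choose κ hκ using hex
  have hcoord : ∀ k, Tendsto (fun n => (T (x n)) k) atTop (nhds 0) := by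
    intro k
    have := hwn ((evC0 k).comp T)
    simpa using this
  -- the chosen coordinates tend to infinity
  have hκtop : Tendsto κ atTop atTop := by
    rw [Filter.tendsto_atTop]
    intro m
    by_contra hnot
    rw [not_eventually] at hnot
    have hinf : {j | κ j < m}.Infinite := by
      rw [← Nat.frequently_atTop_iff_infinite]
      simpa [not_le] using hnot
    have hfin : ∀ k0, {j | κ j = k0}.Finite := by
      intro k0
      rw [← Set.not_infinite]
      intro hkinf
      have hfr : ∃ᶠ j in atTop, κ j = k0 := Nat.frequently_atTop_iff_infinite.2 hkinf
      have hev : ∀ᶠ j in atTop, |(T (x (φ j))) k0| < ε / 2 := by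
        have h4 := (hcoord k0).comp hφmono.tendsto_atTop
        have h5 := Metric.tendsto_nhds.1 h4 (ε / 2) (half_pos hε)
        simpa [Real.dist_eq] using h5
      obtain ⟨j, hj1, hj2⟩ := (hfr.and_eventually hev).exists
      have h6 := hκ j
      rw [hj1] at h6
      linarith
    have hfin2 : {j | κ j < m}.Finite := by
      have hsub : {j | κ j < m} ⊆ ⋃ k0 ∈ Finset.range m, {j | κ j = k0} := by
        intro j hj
        simp only [Finset.coe_range, mem_iUnion, mem_setOf_eq, exists_prop, Finset.mem_range]
        exact ⟨κ j, hj, rfl⟩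
      exact ((Finset.range m).finite_toSet.biUnion fun k0 _ => hfin k0).subset hsub
    exact hinf hfin2
  set g : ℕ → (X →L[ℝ] ℝ) := fun j => (evC0 (κ j)).comp T with hg
  have hgnull : ∀ F : (X →L[ℝ] ℝ) →L[ℝ] ℝ, Tendsto (fun j => F (g j)) atTop (nhds 0) := by
    intro F
    set c : ℝ := (‖F‖ + 1)⁻¹ with hc
    have hc0 : 0 < c := by positivity
    set F' : (X →L[ℝ] ℝ) →L[ℝ] ℝ := c • F with hF'
    have hF'n : ‖F'‖ < 1 := by
      have hb : ‖F'‖ ≤ (‖F‖ + 1)⁻¹ * ‖F‖ := by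
        apply ContinuousLinearMap.opNorm_le_bound _ (by positivity)
        intro h
        rw [hF']
        simp only [ContinuousLinearMap.smul_apply, smul_eq_mul]
        rw [Real.norm_eq_abs, abs_mul, abs_of_pos hc0, hc, mul_assoc]
        gcongr
        exact (Real.norm_eq_abs (F h)).symm.trans_le (F.le_opNorm h)
      have h9 : (‖F‖ + 1) * (‖F‖ + 1)⁻¹ = 1 := mul_inv_cancel₀ (by positivity)
      nlinarith [norm_nonneg F, inv_pos.2 (show (0:ℝ) < ‖F‖ + 1 by positivity)]
    have h1 : Tendsto (fun k => F' ((evC0 k).comp T)) atTop (nhds 0) :=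
      coord_null T hT F' hF'n
    have h2 : Tendsto (fun j => F' (g j)) atTop (nhds 0) := h1.comp hκtop
    have h3 : ∀ j, F (g j) = c⁻¹ * F' (g j) := by
      intro j
      rw [hF']
      simp only [ContinuousLinearMap.smul_apply, smul_eq_mul]
      field_simp
    have h4 := h2.const_mul (c⁻¹)
    rw [mul_zero] at h4
    refine h4.congr fun j => (h3 j).symm
  obtain ⟨N, hN⟩ := hDP g hgnull (ε / 2) (half_pos hε)
  have h1 := hN N le_rfl (x (φ N)) (mem_range_self _)
  have h2 := hκ N
  simp only [hg, ContinuousLinearMap.comp_apply, evC0_apply] at h1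
  linarith
end
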